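/- arXiv:0905.3081 — 2 statements merged into one kernel-verified Lean document; each statement's English description precedes it below -/
import Mathlib

section
/- For every integer n ≥ 1 there exists a bijection between the set of Catalan tableaux of index n and the set of binary trees with n vertices. -/
/-- A binary tree: empty, or a root with a left and a right subtree. -/
inductive BinTree : Type
  | nil : BinTree
  | node : BinTree → BinTree → BinTree
  deriving DecidableEq

/-- Number of vertices of a binary tree. -/
def BinTree.size : BinTree → ℕ
  | .nil => 0
  | .node l r => l.size + r.size + 1

/-- Length (number of vertices) of the left branch. -/
def BinTree.leftBranchLen : BinTree → ℕ
  | .nil => 0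
  | .node l _ => l.leftBranchLen + 1

/-- Length (number of vertices) of the right branch. -/
def BinTree.rightBranchLen : BinTree → ℕ
  | .nil => 0
  | .node _ r => r.rightBranchLen + 1

/-- Word over {a,b} (a = `true`, b = `false`) reading the vertices in symmetric
(in-)order; a vertex contributes `true` iff it has a right child. -/
def BinTree.canopyFull : BinTree → List Bool
  | .nil => []
  | .node l r => l.canopyFull ++ (decide (r ≠ BinTree.nil)) :: r.canopyFull

/-- The canopy of a binary tree with `n` vertices: the word `u₁ … u_{n-1}` over
{a = `true`, b = `false`} with `uᵢ = a` iff the `i`-th vertex in symmetric order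
has a right child.  (The last vertex in symmetric order never has a right child,
so it is dropped.) -/
def BinTree.canopy (B : BinTree) : List Bool := B.canopyFull.dropLast

/-- A Catalan tableau of index `n`: a partition `λ₁ ≥ … ≥ λ_k` with `λ₁ = n - k`,
drawn right-justified inside the `k × (n-k)` rectangle (rows bottom to top, row `i`
having `lam i` cells, occupying columns `j` with `m - lam i ≤ j < m` where
`m = n - k`), filled with 0's (`false`) and 1's (`true`) such that every column
contains exactly one 1 and no 0 has both a 1 below it in its column and a 1 to
its right in its row.  Entries outside the diagram are forced to `false`. -/
structure CatalanTableau (n : ℕ) where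
  k : ℕ
  m : ℕ
  hk : 0 < k
  hkm : k + m = n
  lam : Fin k → ℕ
  lam_le : ∀ i, lam i ≤ m
  lam_first : lam ⟨0, hk⟩ = m
  lam_anti : ∀ i j : Fin k, i ≤ j → lam j ≤ lam i
  f : Fin k → Fin m → Bool
  f_outside : ∀ (i : Fin k) (j : Fin m), (j : ℕ) < m - lam i → f i j = false
  col_one : ∀ j : Fin m, ∃! i : Fin k, f i j = true
  no_bad : ∀ (i : Fin k) (j : Fin m), m - lam i ≤ (j : ℕ) → f i j = false →
    ¬ ((∃ i' : Fin k, i' < i ∧ f i' j = true) ∧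
       (∃ j' : Fin m, (j : ℕ) < (j' : ℕ) ∧ f i j' = true))

/-- The profile of a Catalan tableau: the NW border of its Ferrers diagram read
from the bottom-left corner of the rectangle to its top-right corner
(a = `true` for a north step, b = `false` for an east step), with the first
letter (always a north step) deleted. -/
def CatalanTableau.profile {n : ℕ} (T : CatalanTableau n) : List Bool :=
  ((List.finRange T.k).flatMap (fun i =>
    true :: List.replicate
      (T.lam i - (if h : (i : ℕ) + 1 < T.k then T.lam ⟨(i : ℕ) + 1, h⟩ else 0)) false)).tail

/-- Number of 1's in the first (bottom) row of a Catalan tableau. -/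
noncomputable def CatalanTableau.onesFirstRow {n : ℕ} (T : CatalanTableau n) : ℕ :=
  Nat.card {j : Fin T.m // T.f ⟨0, T.hk⟩ j = true}

/-- An entry is restricted if it is a 0 (in a cell of the diagram) lying above
some 1 in its column. -/
def CatalanTableau.Restricted {n : ℕ} (T : CatalanTableau n)
    (i : Fin T.k) (j : Fin T.m) : Prop :=
  T.m - T.lam i ≤ (j : ℕ) ∧ T.f i j = false ∧ ∃ i' : Fin T.k, i' < i ∧ T.f i' j = true

/-- Number of unrestricted rows (rows of the rectangle containing no restricted
entry). -/
noncomputable def CatalanTableau.unrestrictedRows {n : ℕ} (T : CatalanTableau n) : ℕ :=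
  Nat.card {i : Fin T.k // ∀ j : Fin T.m, ¬ T.Restricted i j}

/-- `weaklyBelow ω η`: the lattice paths coded by `ω`, `η` (a = `true` = north
step, b = `false` = east step, both starting at the origin) have the same
endpoints and `η` never passes strictly above `ω`. -/
def weaklyBelow (ω η : List Bool) : Prop :=
  η.length = ω.length ∧ η.count true = ω.count true ∧
    ∀ t : ℕ, (η.take t).count true ≤ (ω.take t).count true

/-- Heights at which the successive east steps of a path occur. -/
def eastHeightsAux : ℕ → List Bool → List ℕ
  | _, [] => []
  | h, true :: w => eastHeightsAux (h + 1) w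
  | h, false :: w => h :: eastHeightsAux h w

def eastHeights (w : List Bool) : List ℕ := eastHeightsAux 0 w

/-- Number of horizontal contacts of two paths: unit east edges traversed by
both paths. -/
def contacts (ω η : List Bool) : ℕ :=
  ((eastHeights ω).zip (eastHeights η)).countP (fun p => p.1 == p.2)

/-- Number of trailing north steps of a path. -/
def trailingNorth (w : List Bool) : ℕ := (w.reverse.takeWhile (· == true)).length

/-- Number of left edges, i.e. of vertices having a left child. -/
def BinTree.leftEdgeCount : BinTree → ℕ
  | .nil => 0
  | .node l r => l.leftEdgeCount + r.leftEdgeCount + (if l = BinTree.nil then 0 else 1)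

/-- Number of vertices having no right child. -/
def BinTree.noRightCount : BinTree → ℕ
  | .nil => 0
  | .node l r => l.noRightCount + r.noRightCount + (if r = BinTree.nil then 1 else 0)

/-- Symmetric-order traversal recording, for each vertex, whether it has a left
child, whether it has a right child, and its right height (the second argument
is the right height of the current root). -/
def BinTree.inorderAux : BinTree → ℕ → List (Bool × Bool × ℕ)
  | .nil, _ => []
  | .node l r, h =>
      BinTree.inorderAux l h ++
        (decide (l ≠ BinTree.nil), decide (r ≠ BinTree.nil), h) :: BinTree.inorderAux r (h + 1)

def BinTree.inorder (B : BinTree) : List (Bool × Bool × ℕ) := B.inorderAux 0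

/-- The sequence `ρ₁, …, ρ_m`: right heights of the parents of the left edges,
the left edges being ordered by their parents in symmetric order. -/
def BinTree.rhoList (B : BinTree) : List ℕ :=
  (B.inorder.filter (fun v => v.1)).map (fun v => v.2.2)

def hsAux : List (Bool × Bool × ℕ) → ℕ → List ℕ
  | [], _ => []
  | v :: rest, c => if v.2.1 then hsAux rest (c + 1) else c :: hsAux rest c

/-- The sequence `h₁, …, h_m`: for each vertex with no right child (in symmetric
order, excluding the last vertex in symmetric order), the number of vertices
preceding it in symmetric order that have a right child. -/
def BinTree.hList (B : BinTree) : List ℕ := (hsAux B.inorder 0).dropLast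

/-- Leaves of the completion `γ(B)` in symmetric order, each recorded as `true`
if it is a left child of its parent and `false` if it is a right child; the
boolean argument records whether the current subtree sits as a left child. -/
def BinTree.gammaLeavesAux : BinTree → Bool → List Bool
  | .nil, isLeft => [isLeft]
  | .node l r, _ => BinTree.gammaLeavesAux l true ++ BinTree.gammaLeavesAux r false

/-- The word of the leaves of the complete binary tree `γ(B)` in symmetric order
(a = `true` for a left child, b = `false` for a right child). -/
def BinTree.leafWord : BinTree → List Bool
  | .nil => []
  | .node l r => BinTree.gammaLeavesAux l true ++ BinTree.gammaLeavesAux r false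

/-!
A Catalan tableau is determined by its number of rows and its list of columns, each column being
recorded by its height and the row of its 1; condition (ii) becomes a condition on pairs of
columns. These column codes decompose like binary trees. If no column has its 1 in the bottom
row, deleting that row leaves a code `R`, and the tableau corresponds to `node nil R`. Otherwise,
cut after the last column `c` whose 1 is in the bottom row: the columns before `c` are no higher
than `c` and form a code `L` with `c.height` rows, while condition (ii) forces every later column
to have its 1 above `c`, so these columns form a code `R` stacked above and to the right of `L`;
the tableau corresponds to `node L R`.
-/

open Finset

namespace List

variable {α : Type*} {p : α → Prop}

theorem exists_split_last [DecidablePred p] {l : List α} (h : ∃ x ∈ l, p x) :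
    ∃ A x S, l = A ++ x :: S ∧ p x ∧ ∀ y ∈ S, ¬ p y := by
  obtain ⟨x, hx⟩ := Option.isSome_iff_exists.mp
    (find?_isSome.mpr (by simpa using h) : (l.reverse.find? (p ·)).isSome)
  obtain ⟨hpx, S, A, hl, hS⟩ := find?_eq_some_iff_append.mp hx
  refine ⟨A.reverse, x, S.reverse, ?_, by simpa using hpx,
    fun y hy => by simpa using hS y (by simpa using hy)⟩
  simpa using congrArg reverse hl

theorem split_last_unique {A A' S S' : List α} {x x' : α}
    (hx : p x) (hx' : p x') (hS : ∀ y ∈ S, ¬ p y) (hS' : ∀ y ∈ S', ¬ p y)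
    (h : A ++ x :: S = A' ++ x' :: S') : A = A' ∧ x = x' ∧ S = S' := by
  rcases append_eq_append_iff.mp h with ⟨t, rfl, ht⟩ | ⟨t, rfl, ht⟩
  · cases t with
    | nil => simpa using ht
    | cons u t =>
      simp only [cons_append, cons.injEq] at ht
      exact absurd hx' (hS x' (ht.2 ▸ by simp))
  · cases t with
    | nil => simpa using ht.symm
    | cons u t =>
      simp only [cons_append, cons.injEq] at ht
      exact absurd hx (hS' x (ht.2 ▸ by simp))

end List

/-- A column of a Catalan tableau: its cells are the rows `0, …, height - 1` (the diagram is
right-justified and its rows shrink upwards), and its 1 sits in row `oneRow`. -/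
@[ext]
structure Column where
  height : ℕ
  oneRow : ℕ

namespace Column

def shift (t : ℕ) (c : Column) : Column := ⟨c.height + t, c.oneRow + t⟩

/-- The condition on a column `c` standing left of a column `d`; the disjunction is condition (ii)
for the cell of `c` in the row of the 1 of `d`. -/
def Precedes (c d : Column) : Prop :=
  c.height ≤ d.height ∧ (d.oneRow ≤ c.oneRow ∨ c.height ≤ d.oneRow)

theorem shift_injective (t : ℕ) : Function.Injective (shift t) := by
  intro c d h
  simp only [shift, mk.injEq] at h
  ext <;> omega

theorem precedes_shift_iff (t : ℕ) {c d : Column} :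
    (c.shift t).Precedes (d.shift t) ↔ c.Precedes d := by
  simp only [Precedes, shift]
  omega

end Column

@[ext]
structure ColumnCode where
  rows : ℕ
  cols : List Column

namespace ColumnCode

def Valid (x : ColumnCode) : Prop :=
  (∀ c ∈ x.cols, c.oneRow < c.height ∧ c.height ≤ x.rows) ∧
    x.cols.Pairwise Column.Precedes

def size (x : ColumnCode) : ℕ := x.rows + x.cols.length

/-- `y` placed above and to the right of `x`. -/
def stack (x y : ColumnCode) : ColumnCode :=
  ⟨x.rows + y.rows, x.cols ++ y.cols.map (Column.shift x.rows)⟩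

/-- The contribution of the root of a tree to its code: a new bottom row if the left subtree is
empty, and otherwise a full-height column with its 1 in the bottom row. -/
def grow (x : ColumnCode) : ColumnCode :=
  if x.rows = 0 then ⟨1, []⟩ else ⟨x.rows, x.cols ++ [⟨x.rows, 0⟩]⟩

theorem size_stack (x y : ColumnCode) : (x.stack y).size = x.size + y.size := by
  simp only [size, stack, List.length_append, List.length_map]
  omega

theorem rows_grow_pos (x : ColumnCode) : 0 < x.grow.rows := by
  unfold grow
  split_ifs with h
  exacts [Nat.one_pos, Nat.pos_of_ne_zero h]

variable {x y z : ColumnCode}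

theorem Valid.cols_eq_nil (hx : x.Valid) (h : x.rows = 0) : x.cols = [] :=
  List.eq_nil_iff_forall_not_mem.mpr fun c hc => by have := hx.1 c hc; omega

theorem Valid.rows_pos (hx : x.Valid) (hsize : 0 < x.size) : 0 < x.rows := by
  refine Nat.pos_of_ne_zero fun h => ?_
  simp [size, h, hx.cols_eq_nil h] at hsize

theorem Valid.stack (hx : x.Valid) (hy : y.Valid) : (x.stack y).Valid := by
  refine ⟨fun c hc => ?_, List.pairwise_append.mpr ⟨hx.2, ?_, fun c hc d hd => ?_⟩⟩
  · rcases List.mem_append.mp hc with hc | hc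
    · have := hx.1 c hc
      exact ⟨this.1, by simp only [ColumnCode.stack]; omega⟩
    · obtain ⟨d, hd, rfl⟩ := List.mem_map.mp hc
      have := hy.1 d hd
      simp only [Column.shift, ColumnCode.stack]
      omega
  · exact List.pairwise_map.mpr (hy.2.imp (Column.precedes_shift_iff _).mpr)
  · obtain ⟨d, hd, rfl⟩ := List.mem_map.mp hd
    have := (hx.1 c hc).2
    simp only [Column.Precedes, Column.shift]
    omega

theorem Valid.grow (hx : x.Valid) : x.grow.Valid := by
  unfold ColumnCode.grow
  split_ifs with h
  · exact ⟨by simp, by simp⟩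
  refine ⟨fun c hc => ?_, List.pairwise_append.mpr ⟨hx.2, by simp, fun c hc d hd => ?_⟩⟩
  · rcases List.mem_append.mp hc with hc | hc
    · exact hx.1 c hc
    · simp only [List.mem_singleton] at hc
      subst hc
      simp only
      omega
  · simp only [List.mem_singleton] at hd
    subst hd
    exact ⟨(hx.1 c hc).2, Or.inl (Nat.zero_le _)⟩

theorem Valid.size_grow (hx : x.Valid) : x.grow.size = x.size + 1 := by
  unfold ColumnCode.grow
  split_ifs with h
  · simp [size, h, hx.cols_eq_nil h]
  · simp [size]
    omega

theorem Valid.of_sublist (hz : z.Valid) {A : List Column} (hA : A.Sublist z.cols) {a : ℕ}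
    (ha : ∀ c ∈ A, c.height ≤ a) : (⟨a, A⟩ : ColumnCode).Valid :=
  ⟨fun c hc => ⟨(hz.1 c (hA.subset hc)).1, ha c hc⟩, hz.2.sublist hA⟩

theorem Valid.exists_eq_stack (hz : z.Valid) {A S : List Column} (hcols : z.cols = A ++ S)
    {a : ℕ} (ha : a ≤ z.rows) (hS : ∀ d ∈ S, a ≤ d.oneRow) :
    ∃ y, y.Valid ∧ z = ColumnCode.stack ⟨a, A⟩ y := by
  have hSz : ∀ d ∈ S, d.oneRow < d.height ∧ d.height ≤ z.rows := fun d hd =>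
    hz.1 d (hcols ▸ List.mem_append_right A hd)
  let unshift (d : Column) : Column := ⟨d.height - a, d.oneRow - a⟩
  refine ⟨⟨z.rows - a, S.map unshift⟩, ⟨fun c hc => ?_, ?_⟩, ?_⟩
  · obtain ⟨d, hd, rfl⟩ := List.mem_map.mp hc
    have := hSz d hd
    have := hS d hd
    simp only [unshift]
    omega
  · refine List.pairwise_map.mpr ((List.pairwise_append.mp (hcols ▸ hz.2)).2.1.imp_of_mem ?_)
    intro c d hc hd hcd
    have := hS c hc
    have := hS d hd
    simp only [Column.Precedes, unshift] at hcd ⊢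
    omega
  · have hS' : S.map (Column.shift a ∘ unshift) = S := by
      refine (List.map_congr_left fun d hd => ?_).trans S.map_id
      have := hS d hd
      have := hSz d hd
      simp only [Function.comp_apply, Column.shift, unshift, id]
      ext <;> simp only <;> omega
    ext
    · simp only [ColumnCode.stack]
      omega
    · simp only [ColumnCode.stack, List.map_map, hS', hcols]

theorem Valid.exists_eq_grow_stack (hz : z.Valid) (hrows : 0 < z.rows) :
    ∃ x y : ColumnCode, x.Valid ∧ y.Valid ∧ z = x.grow.stack y := by
  by_cases hzero : ∃ c ∈ z.cols, c.oneRow = 0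
  · obtain ⟨A, c, S, hcols, hc0, hS⟩ := List.exists_split_last hzero
    have hcz := hz.1 c (by simp [hcols])
    have hpw := List.pairwise_append.mp (hcols ▸ hz.2)
    have hA : ∀ b ∈ A, b.height ≤ c.height := fun b hb => (hpw.2.2 b hb c (by simp)).1
    have hSc : ∀ d ∈ S, c.height ≤ d.oneRow := fun d hd => by
      have hcd := (List.pairwise_cons.mp hpw.2.1).1 d hd
      have := hS d hd
      simp only [Column.Precedes] at hcd
      omega
    obtain ⟨y, hy, rfl⟩ := hz.exists_eq_stack (A := A ++ [c]) (by simp [hcols]) hcz.2 hSc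
    refine ⟨⟨c.height, A⟩, y, hz.of_sublist (by simp [hcols]) hA, hy, ?_⟩
    have hc : c = ⟨c.height, 0⟩ := by ext <;> simp [hc0]
    simp only [ColumnCode.grow, Nat.pos_iff_ne_zero.mp (Nat.zero_lt_of_lt hcz.1), if_false]
    rw [← hc]
  · push Not at hzero
    obtain ⟨y, hy, rfl⟩ := hz.exists_eq_stack (A := []) rfl hrows
      fun d hd => Nat.one_le_iff_ne_zero.mpr (hzero d hd)
    exact ⟨⟨0, []⟩, y, ⟨by simp, by simp⟩, hy, rfl⟩

theorem stack_left_cancel (h : x.stack y = x.stack z) : y = z := by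
  simp only [ColumnCode.stack, mk.injEq, Nat.add_left_cancel_iff, List.append_cancel_left_eq,
    (List.map_injective_iff.mpr (Column.shift_injective _)).eq_iff] at h
  exact ColumnCode.ext h.1 h.2

theorem exists_oneRow_eq_zero_grow_stack_iff :
    (∃ c ∈ (x.grow.stack y).cols, c.oneRow = 0) ↔ x.rows ≠ 0 := by
  unfold ColumnCode.grow
  split_ifs with h
  · simp [ColumnCode.stack, Column.shift, h]
  · simp only [ColumnCode.stack]
    exact iff_of_true ⟨⟨x.rows, 0⟩, by simp, rfl⟩ h

theorem Valid.eq_of_grow_stack_eq {x' y' : ColumnCode} (hx : x.Valid) (hx' : x'.Valid)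
    (h : x.grow.stack y = x'.grow.stack y') : x = x' := by
  have hrows : x.rows ≠ 0 ↔ x'.rows ≠ 0 := by
    rw [← exists_oneRow_eq_zero_grow_stack_iff (y := y), h, exists_oneRow_eq_zero_grow_stack_iff]
  by_cases h0 : x.rows = 0
  · have h0' : x'.rows = 0 := by simpa [h0] using hrows
    exact ColumnCode.ext (h0.trans h0'.symm) ((hx.cols_eq_nil h0).trans (hx'.cols_eq_nil h0').symm)
  have h0' : x'.rows ≠ 0 := hrows.mp h0
  have hcols := congrArg ColumnCode.cols h
  simp only [ColumnCode.stack, ColumnCode.grow, h0, h0', if_false, List.append_assoc,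
    List.singleton_append] at hcols
  have hshift : ∀ {t : ℕ} {l : List Column}, t ≠ 0 →
      ∀ d ∈ l.map (Column.shift t), d.oneRow ≠ 0 := by
    intro t l ht d hd
    obtain ⟨d, -, rfl⟩ := List.mem_map.mp hd
    simp only [Column.shift]
    omega
  obtain ⟨hA, hc, -⟩ := List.split_last_unique (p := fun c : Column => c.oneRow = 0) rfl rfl
    (hshift h0) (hshift h0') hcols
  exact ColumnCode.ext (congrArg Column.height hc) hA

end ColumnCode

namespace BinTree

def toCode : BinTree → ColumnCode
  | .nil => ⟨0, []⟩
  | .node l r => l.toCode.grow.stack r.toCode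

theorem toCode_valid : ∀ B : BinTree, B.toCode.Valid
  | .nil => ⟨by simp [toCode], by simp [toCode]⟩
  | .node l r => (toCode_valid l).grow.stack (toCode_valid r)

theorem size_toCode : ∀ B : BinTree, B.toCode.size = B.size
  | .nil => rfl
  | .node l r => by
    rw [toCode, ColumnCode.size_stack, (toCode_valid l).size_grow, size_toCode l, size_toCode r,
      size]
    omega

theorem rows_toCode_node_pos (l r : BinTree) : 0 < (node l r).toCode.rows :=
  l.toCode.rows_grow_pos.trans_le (Nat.le_add_right _ _)

theorem toCode_injective : Function.Injective toCode := by
  intro B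
  induction B with
  | nil =>
    rintro (_ | ⟨l, r⟩) h
    · rfl
    · exact absurd (congrArg ColumnCode.rows h) (rows_toCode_node_pos l r).ne
  | node l r ihl ihr =>
    rintro (_ | ⟨l', r'⟩) h
    · exact absurd (congrArg ColumnCode.rows h) (rows_toCode_node_pos l r).ne'
    · have hl := (toCode_valid l).eq_of_grow_stack_eq (toCode_valid l') h
      rw [toCode, toCode, hl] at h
      rw [ihl hl, ihr (ColumnCode.stack_left_cancel h)]

theorem exists_toCode_eq {x : ColumnCode} (hx : x.Valid) : ∃ B : BinTree, B.toCode = x := by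
  induction hs : x.size using Nat.strong_induction_on generalizing x with
  | _ s ih =>
  rcases Nat.eq_zero_or_pos x.rows with h0 | hpos
  · exact ⟨.nil, ColumnCode.ext h0.symm (hx.cols_eq_nil h0).symm⟩
  obtain ⟨y, z, hy, hz, rfl⟩ := ColumnCode.Valid.exists_eq_grow_stack hx hpos
  have hsize := hs ▸ (ColumnCode.size_stack y.grow z).trans (by rw [hy.size_grow])
  obtain ⟨l, rfl⟩ := ih y.size (by omega) hy rfl
  obtain ⟨r, rfl⟩ := ih z.size (by omega) hz rfl
  exact ⟨.node l r, rfl⟩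

end BinTree

namespace CatalanTableau

variable {n : ℕ} (T : CatalanTableau n)

def start (i : Fin T.k) : ℕ := T.m - T.lam i

def height (j : Fin T.m) : ℕ := #{i | T.start i ≤ j}

noncomputable def oneRow (j : Fin T.m) : Fin T.k := (T.col_one j).choose

theorem start_monotone : Monotone T.start := fun i i' h =>
  Nat.sub_le_sub_left (T.lam_anti i i' h) _

theorem lt_height_iff (i : Fin T.k) (j : Fin T.m) : (i : ℕ) < T.height j ↔ T.start i ≤ j :=
  Fin.lt_card_filter_univ_iff_apply_of_imp _ fun _ _ h hi => (T.start_monotone h).trans hi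

theorem height_le (j : Fin T.m) : T.height j ≤ T.k :=
  (card_le_univ _).trans_eq (Fintype.card_fin _)

theorem height_monotone : Monotone T.height := fun _ _ h =>
  card_le_card fun _ => by simpa using fun hi => hi.trans h

theorem f_eq_decide (i : Fin T.k) (j : Fin T.m) : T.f i j = decide (T.oneRow j = i) := by
  have hspec : T.f (T.oneRow j) j = true ∧ ∀ i, T.f i j = true → i = T.oneRow j :=
    (T.col_one j).choose_spec
  by_cases h : T.oneRow j = i
  · simpa [h] using hspec.1
  · simpa [h] using fun hf => h (hspec.2 i hf).symm

theorem oneRow_lt_height (j : Fin T.m) : (T.oneRow j : ℕ) < T.height j := by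
  refine (T.lt_height_iff _ j).mpr (not_lt.mp fun h => ?_)
  simpa [f_eq_decide] using T.f_outside _ j h

theorem height_le_oneRow {j j' : Fin T.m} (hjj' : j < j') (hr : T.oneRow j < T.oneRow j') :
    T.height j ≤ T.oneRow j' := by
  refine not_lt.mp fun h => T.no_bad (T.oneRow j') j ((T.lt_height_iff _ j).mp h) ?_
    ⟨⟨T.oneRow j, hr, by simp [f_eq_decide]⟩, ⟨j', hjj', by simp [f_eq_decide]⟩⟩
  simpa [f_eq_decide] using hr.ne

theorem oneRow_eq_of_f {i : Fin T.k} {j : Fin T.m} (h : T.f i j = true) : T.oneRow j = i := by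
  simpa [f_eq_decide] using h

noncomputable def toCode : ColumnCode := ⟨T.k, List.ofFn fun j => ⟨T.height j, T.oneRow j⟩⟩

theorem toCode_valid : T.toCode.Valid := by
  refine ⟨fun c hc => ?_, List.pairwise_ofFn.mpr fun j j' hjj' => ?_⟩
  · obtain ⟨j, rfl⟩ := List.mem_ofFn.mp hc
    exact ⟨T.oneRow_lt_height j, T.height_le j⟩
  · refine ⟨T.height_monotone hjj'.le, ?_⟩
    rcases le_or_gt (T.oneRow j') (T.oneRow j) with h | h
    · exact Or.inl h
    · exact Or.inr (T.height_le_oneRow hjj' h)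

theorem size_toCode : T.toCode.size = n := by
  simpa [toCode, ColumnCode.size] using T.hkm

end CatalanTableau

namespace ColumnCode

variable {n : ℕ} {x : ColumnCode}

def start (x : ColumnCode) (i : ℕ) : ℕ := #{j : Fin x.cols.length | x.cols[j].height ≤ i}

theorem start_le_length (i : ℕ) : x.start i ≤ x.cols.length :=
  (card_le_univ _).trans_eq (Fintype.card_fin _)

theorem Valid.oneRow_lt_height (hx : x.Valid) (j : Fin x.cols.length) :
    x.cols[j].oneRow < x.cols[j].height :=
  (hx.1 _ (List.getElem_mem _)).1

theorem Valid.height_le_rows (hx : x.Valid) (j : Fin x.cols.length) :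
    x.cols[j].height ≤ x.rows :=
  (hx.1 _ (List.getElem_mem _)).2

theorem Valid.precedes (hx : x.Valid) {j j' : Fin x.cols.length} (h : j < j') :
    x.cols[j].Precedes x.cols[j'] :=
  List.pairwise_iff_getElem.mp hx.2 j j' j.2 j'.2 h

theorem Valid.height_monotone (hx : x.Valid) :
    Monotone fun j : Fin x.cols.length => x.cols[j].height := by
  intro j j' h
  rcases h.eq_or_lt with rfl | h
  · rfl
  · exact (hx.precedes h).1

theorem Valid.start_le_iff (hx : x.Valid) (i : ℕ) (j : Fin x.cols.length) :
    x.start i ≤ j ↔ i < x.cols[j].height := by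
  rw [← not_lt, start, Fin.lt_card_filter_univ_iff_apply_of_imp _
    fun _ _ h hi => (hx.height_monotone h).trans hi, not_le]

def toTableau (x : ColumnCode) (hx : x.Valid) (hrows : 0 < x.rows) (hsize : x.size = n) :
    CatalanTableau n where
  k := x.rows
  m := x.cols.length
  hk := hrows
  hkm := hsize
  lam i := x.cols.length - x.start i
  lam_le _ := Nat.sub_le _ _
  lam_first := by
    have hstart : x.start 0 = 0 :=
      card_eq_zero.mpr (filter_eq_empty_iff.mpr fun j _ => by
        have := hx.oneRow_lt_height j
        omega)
    simp [hstart]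
  lam_anti i i' h :=
    Nat.sub_le_sub_left (card_le_card fun j => by simpa using fun hj => hj.trans h) _
  f i j := decide (x.cols[j].oneRow = i)
  f_outside i j hj := by
    rw [Nat.sub_sub_self (start_le_length i), ← not_le, hx.start_le_iff] at hj
    have := hx.oneRow_lt_height j
    simp only [decide_eq_false_iff_not]
    omega
  col_one j :=
    ⟨⟨x.cols[j].oneRow, (hx.oneRow_lt_height j).trans_le (hx.height_le_rows j)⟩, by simp,
      fun i hi => Fin.ext (of_decide_eq_true hi).symm⟩
  no_bad i j hj hf := by
    rintro ⟨⟨i', hi', hfi'⟩, ⟨j', hjj', hfj'⟩⟩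
    rw [Nat.sub_sub_self (start_le_length i), hx.start_le_iff] at hj
    have hpre := hx.precedes (Fin.lt_def.mpr hjj')
    simp only [decide_eq_true_eq] at hfi' hfj'
    simp only [Column.Precedes, hfi', hfj'] at hpre
    have : (i' : ℕ) < i := hi'
    omega

variable (hx : x.Valid) (hrows : 0 < x.rows) (hsize : x.size = n)

theorem height_toTableau (j : Fin x.cols.length) :
    (x.toTableau hx hrows hsize).height j = x.cols[j].height := by
  change #{i : Fin x.rows | x.cols.length - (x.cols.length - x.start i) ≤ j} = _
  simp_rw [Nat.sub_sub_self (start_le_length _), hx.start_le_iff]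
  rw [Fin.card_filter_val_lt, min_eq_right (hx.height_le_rows j)]

theorem oneRow_toTableau (j : Fin x.cols.length) :
    ((x.toTableau hx hrows hsize).oneRow j : ℕ) = x.cols[j].oneRow :=
  congrArg Fin.val ((x.toTableau hx hrows hsize).oneRow_eq_of_f
    (i := ⟨x.cols[j].oneRow, (hx.oneRow_lt_height j).trans_le (hx.height_le_rows j)⟩)
    (decide_eq_true rfl))

theorem toCode_toTableau : (x.toTableau hx hrows hsize).toCode = x := by
  refine ColumnCode.ext rfl (List.ext_getElem (List.length_ofFn ..) fun j _ hj => ?_)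
  simp only [CatalanTableau.toCode, List.getElem_ofFn]
  exact Column.ext (height_toTableau hx hrows hsize ⟨j, hj⟩)
    (oneRow_toTableau hx hrows hsize ⟨j, hj⟩)

end ColumnCode

namespace CatalanTableau

variable {n : ℕ}

theorem ext_of_cast {T T' : CatalanTableau n} (hk : T.k = T'.k) (hm : T.m = T'.m)
    (hlam : ∀ i, T.lam i = T'.lam (Fin.cast hk i))
    (hf : ∀ i j, T.f i j = T'.f (Fin.cast hk i) (Fin.cast hm j)) : T = T' := by
  obtain ⟨k, m, _, _, lam, _, _, _, f, _, _, _⟩ := T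
  obtain ⟨k', m', _, _, lam', _, _, _, f', _, _, _⟩ := T'
  dsimp only at hk hm hlam hf
  subst hk hm
  obtain rfl : lam = lam' := funext hlam
  obtain rfl : f = f' := funext₂ hf
  rfl

variable (T : CatalanTableau n)

theorem length_cols_toCode : T.toCode.cols.length = T.m := List.length_ofFn

theorem getElem_cols_toCode (j : Fin T.toCode.cols.length) :
    T.toCode.cols[j] =
      ⟨T.height (j.cast T.length_cols_toCode), T.oneRow (j.cast T.length_cols_toCode)⟩ :=
  List.getElem_ofFn _

theorem start_toCode (i : Fin T.k) : T.toCode.start i = T.start i := by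
  have hiff (j : Fin T.toCode.cols.length) :
      T.toCode.cols[j].height ≤ i ↔ (j : ℕ) < T.start i := by
    rw [getElem_cols_toCode, ← not_lt, T.lt_height_iff, not_le, Fin.val_cast]
  rw [ColumnCode.start, filter_congr fun j _ => hiff j, Fin.card_filter_val_lt,
    length_cols_toCode]
  exact min_eq_right (Nat.sub_le _ _)

theorem rows_toCode_pos : 0 < T.toCode.rows := T.hk

theorem toTableau_toCode :
    T.toCode.toTableau T.toCode_valid T.rows_toCode_pos T.size_toCode = T := by
  refine ext_of_cast rfl T.length_cols_toCode (fun (i : Fin T.k) => ?_)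
    (fun (i : Fin T.k) (j : Fin T.toCode.cols.length) => ?_)
  · show T.toCode.cols.length - T.toCode.start i = T.lam i
    rw [length_cols_toCode, start_toCode, start, Nat.sub_sub_self (T.lam_le i)]
  · show decide (T.toCode.cols[j].oneRow = i) = _
    rw [getElem_cols_toCode, f_eq_decide, decide_eq_decide, Fin.val_inj]
    rfl

noncomputable def equivCode (n : ℕ) :
    CatalanTableau n ≃ {x : ColumnCode // x.Valid ∧ 0 < x.rows ∧ x.size = n} where
  toFun T := ⟨T.toCode, T.toCode_valid, T.rows_toCode_pos, T.size_toCode⟩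
  invFun x := x.1.toTableau x.2.1 x.2.2.1 x.2.2.2
  left_inv := toTableau_toCode
  right_inv _ := Subtype.ext (ColumnCode.toCode_toTableau ..)

end CatalanTableau

noncomputable def BinTree.equivCode (n : ℕ) :
    {B : BinTree // B.size = n} ≃ {x : ColumnCode // x.Valid ∧ x.size = n} :=
  Equiv.ofBijective (fun B => ⟨B.1.toCode, B.1.toCode_valid, B.1.size_toCode.trans B.2⟩)
    ⟨fun _ _ h => Subtype.ext (BinTree.toCode_injective (congrArg Subtype.val h)), fun x => by
      obtain ⟨B, hB⟩ := BinTree.exists_toCode_eq x.2.1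
      exact ⟨⟨B, B.size_toCode.symm.trans (hB ▸ x.2.2)⟩, Subtype.ext hB⟩⟩

/-- For every integer `n ≥ 1` there exists a bijection between the
set of Catalan tableaux of index `n` and the set of binary trees with `n`
vertices. -/
theorem catalanTableau_equiv_binTree (n : ℕ) (hn : 1 ≤ n) :
    Nonempty (CatalanTableau n ≃ {B : BinTree // B.size = n}) :=
  ⟨(CatalanTableau.equivCode n).trans <|
    (Equiv.subtypeEquivRight fun _ => ⟨fun h => ⟨h.1, h.2.2⟩,
      fun h => ⟨h.1, h.1.rows_pos (h.2 ▸ hn), h.2⟩⟩).trans (BinTree.equivCode n).symm⟩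
end

section
/- For every integer n ≥ 1 and every word u of length n over {a,b}, the number of binary trees with n+1 vertices whose canopy is u equals the number of lattice paths η (with unit north and east steps) that are weakly below the path ω_u. -/
/-!
Both sides are built letter by letter. A tree with canopy `u x` comes from a unique tree `B`
with canopy `u` by adding a new last vertex (in symmetric order) at one of the
`rightBranchLen B + 1` places along the right branch of `B`; the new letter is `a` exactly when
the new vertex is hung below the whole right branch. A path below `ω_{u x}` comes from a unique
path `η` below `ω_u`: for `x = a` by appending a north step, for `x = b` by inserting an east
step before `s ≤ trailingNorth η` of its final north steps. The new tree has right branch of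
length `i + 1` when grafted at depth `i`, and the new path ends with exactly `s` north steps, so
the invariant `rightBranchLen = trailingNorth + 1` lets the two constructions be matched, giving
a bijection by induction on `u`.
-/

def IsSlot : Bool → ℕ → ℕ → Prop
  | true, t, s => s = t
  | false, t, s => s < t

lemma isSlot_iff {x : Bool} {t s : ℕ} : IsSlot x t s ↔ s ≤ t ∧ decide (s = t) = x := by
  cases x <;> simp only [IsSlot] <;> grind

namespace BinTree

/-- The subtree rooted at the `i`-th vertex of the right branch (the root being the `0`-th, and
the empty tree past its end) is replaced by a new vertex having it as left subtree. The new
vertex is the last one in symmetric order. -/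
def insertLast : BinTree → ℕ → BinTree
  | B, 0 => node B nil
  | nil, _ + 1 => node nil nil
  | node l r, i + 1 => node l (r.insertLast i)

variable {B B' : BinTree} {i : ℕ}

lemma insertLast_ne_nil (B : BinTree) (i : ℕ) : B.insertLast i ≠ nil := by
  cases B <;> cases i <;> simp [insertLast]

lemma ne_nil_of_size_eq_succ {n : ℕ} (h : B.size = n + 1) : B ≠ nil := by
  rintro rfl
  simp [size] at h

lemma eq_node_nil_nil_of_size_eq_one (h : B.size = 1) : B = node nil nil := by
  rcases B with _ | ⟨_ | _, _ | _⟩ <;> simp [size] at h ⊢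

lemma size_insertLast (h : i ≤ B.rightBranchLen) : (B.insertLast i).size = B.size + 1 := by
  induction B generalizing i with
  | nil => simp_all [rightBranchLen, insertLast, size]
  | node l r _ ihr =>
    cases i with
    | zero => simp [insertLast, size]
    | succ i =>
      simp only [rightBranchLen, insertLast, size] at h ⊢
      rw [ihr (by omega)]
      omega

lemma rightBranchLen_insertLast (h : i ≤ B.rightBranchLen) :
    (B.insertLast i).rightBranchLen = i + 1 := by
  induction B generalizing i with
  | nil => simp_all [rightBranchLen, insertLast]
  | node l r _ ihr =>
    cases i with
    | zero => simp [insertLast, rightBranchLen]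
    | succ i =>
      simp only [rightBranchLen, insertLast] at h ⊢
      rw [ihr (by omega)]

lemma eq_of_insertLast_eq {j : ℕ} (hi : i ≤ B.rightBranchLen) (hj : j ≤ B'.rightBranchLen)
    (h : B.insertLast i = B'.insertLast j) : B = B' ∧ i = j := by
  obtain rfl : i = j := by
    simpa [rightBranchLen_insertLast hi, rightBranchLen_insertLast hj] using
      congrArg rightBranchLen h
  refine ⟨?_, rfl⟩
  induction i generalizing B B' with
  | zero => simpa [insertLast] using h
  | succ i ih =>
    cases B with
    | nil => simp [rightBranchLen] at hi
    | node l r =>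
      cases B' with
      | nil => simp [rightBranchLen] at hj
      | node l' r' =>
        simp only [insertLast, node.injEq, rightBranchLen] at h hi hj ⊢
        exact ⟨h.1, ih (by omega) (by omega) h.2⟩

lemma exists_eq_insertLast (hB : B ≠ nil) :
    ∃ (B' : BinTree) (i : ℕ), i ≤ B'.rightBranchLen ∧ B = B'.insertLast i := by
  induction B with
  | nil => contradiction
  | node l r _ ihr =>
    by_cases hr : r = nil
    · exact ⟨l, 0, Nat.zero_le _, by simp [insertLast, hr]⟩
    · obtain ⟨r', j, hj, rfl⟩ := ihr hr
      exact ⟨node l r', j + 1, by simpa [rightBranchLen] using hj, rfl⟩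

lemma canopyFull_eq_canopy_append_false (hB : B ≠ nil) :
    B.canopyFull = B.canopy ++ [false] := by
  suffices ∃ w, B.canopyFull = w ++ [false] by
    obtain ⟨w, hw⟩ := this
    rw [canopy, hw, List.dropLast_concat]
  induction B with
  | nil => contradiction
  | node l r _ ihr =>
    by_cases hr : r = nil
    · exact ⟨l.canopyFull, by simp [canopyFull, hr]⟩
    · obtain ⟨w, hw⟩ := ihr hr
      exact ⟨l.canopyFull ++ true :: w, by simp [canopyFull, hw, hr]⟩

lemma canopy_node {l r : BinTree} (hr : r ≠ nil) :
    (node l r).canopy = l.canopyFull ++ true :: r.canopy := by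
  rw [canopy, canopyFull, canopyFull_eq_canopy_append_false hr, ← List.cons_append,
    ← List.append_assoc, List.dropLast_concat]
  simp [hr]

lemma canopyFull_insertLast (hB : B ≠ nil) (h : i ≤ B.rightBranchLen) :
    (B.insertLast i).canopyFull = B.canopy ++ [decide (i = B.rightBranchLen), false] := by
  induction B generalizing i with
  | nil => contradiction
  | node l r _ ihr =>
    cases i with
    | zero =>
      rw [insertLast, canopyFull, canopyFull_eq_canopy_append_false hB]
      simp [canopyFull, rightBranchLen]
    | succ i =>
      simp only [rightBranchLen] at h
      by_cases hr : r = nil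
      · subst hr
        obtain rfl : i = 0 := by simpa [rightBranchLen] using h
        simp [insertLast, canopy, canopyFull, rightBranchLen]
      · rw [insertLast, canopyFull, ihr hr (by omega), canopy_node hr]
        simp [insertLast_ne_nil, rightBranchLen]

lemma canopy_insertLast (hB : B ≠ nil) (h : i ≤ B.rightBranchLen) :
    (B.insertLast i).canopy = B.canopy ++ [decide (i = B.rightBranchLen)] := by
  rw [canopy, canopyFull_insertLast hB h, ← List.singleton_append, ← List.append_assoc,
    List.dropLast_concat]

lemma insertLast_size_canopy {u : List Bool} {x : Bool} (hsize : B.size = u.length + 1)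
    (hcan : B.canopy = u) (hi : IsSlot x B.rightBranchLen i) :
    (B.insertLast i).size = (u ++ [x]).length + 1 ∧ (B.insertLast i).canopy = u ++ [x] := by
  rw [isSlot_iff] at hi
  rw [size_insertLast hi.1, hsize, canopy_insertLast (ne_nil_of_size_eq_succ hsize) hi.1, hcan,
    hi.2, List.length_append, List.length_singleton]
  exact ⟨rfl, rfl⟩

end BinTree

lemma List.count_take_le_count_take {α : Type*} [BEq α] (l : List α) (a : α) {t₁ t₂ : ℕ}
    (h : t₁ ≤ t₂) : (l.take t₁).count a ≤ (l.take t₂).count a :=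
  (List.take_sublist_take_left h).count_le a

lemma List.count_le_count_take_add {α : Type*} [BEq α] (l : List α) (a : α) (t : ℕ) :
    l.count a ≤ (l.take t).count a + (l.length - t) := by
  conv_lhs => rw [← List.take_append_drop t l, List.count_append]
  have := (l.drop t).count_le_length (a := a)
  rw [List.length_drop] at this
  omega

lemma List.insertIdx_length_append {α : Type*} (β γ : List α) (a : α) :
    (β ++ γ).insertIdx β.length a = β ++ a :: γ := by
  induction β with
  | nil => simp
  | cons b β ih => simp [List.insertIdx_succ_cons, ih]

lemma count_true_take_append_false_cons (β γ : List Bool) (t : ℕ) :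
    ((β ++ false :: γ).take t).count true =
      (β.take t).count true + (γ.take (t - β.length - 1)).count true := by
  rcases le_or_gt t β.length with ht | ht
  · simp [List.take_append, Nat.sub_eq_zero_of_le ht]
  · rw [List.take_append, show t - β.length = (t - β.length - 1) + 1 by omega]
    simp

section Paths

variable {u v η β : List Bool} {x : Bool} {s : ℕ}

@[simp] lemma trailingNorth_append_true : trailingNorth (η ++ [true]) = trailingNorth η + 1 := by
  simp [trailingNorth]

@[simp] lemma trailingNorth_append_false : trailingNorth (η ++ [false]) = 0 := by
  simp [trailingNorth]

lemma trailingNorth_append_replicate :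
    trailingNorth (η ++ .replicate s true) = trailingNorth η + s := by
  induction s with
  | zero => simp
  | succ s ih =>
    rw [List.replicate_succ', ← List.append_assoc, trailingNorth_append_true, ih]
    rfl

lemma trailingNorth_append_false_replicate :
    trailingNorth (β ++ false :: .replicate s true) = s := by
  rw [← List.singleton_append, ← List.append_assoc, trailingNorth_append_replicate]
  simp

lemma exists_eq_append_replicate_of_le_trailingNorth (h : s ≤ trailingNorth η) :
    ∃ β, η = β ++ .replicate s true := by
  suffices ∃ β, η = β ++ .replicate (trailingNorth η) true by
    obtain ⟨β, hβ⟩ := this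
    refine ⟨β ++ .replicate (trailingNorth η - s) true, ?_⟩
    rw [List.append_assoc, List.replicate_append_replicate, Nat.sub_add_cancel h, ← hβ]
  clear h
  induction η using List.reverseRecOn with
  | nil => exact ⟨[], rfl⟩
  | append_singleton η b ih =>
    cases b with
    | false => exact ⟨η ++ [false], by simp⟩
    | true =>
      obtain ⟨β, hβ⟩ := ih
      refine ⟨β, ?_⟩
      rw [trailingNorth_append_true, List.replicate_succ', ← List.append_assoc, ← hβ]

lemma exists_eq_append_false_replicate (h : false ∈ η) :
    ∃ β, η = β ++ false :: .replicate (trailingNorth η) true := by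
  induction η using List.reverseRecOn with
  | nil => contradiction
  | append_singleton η b ih =>
    cases b with
    | false => exact ⟨η, by simp⟩
    | true =>
      obtain ⟨β, hβ⟩ := ih (by simpa using h)
      refine ⟨β, ?_⟩
      rw [trailingNorth_append_true, List.replicate_succ']
      conv_lhs => rw [hβ]
      simp

lemma weaklyBelow_append_iff : weaklyBelow (u ++ v) (η ++ v) ↔ weaklyBelow u η := by
  simp only [weaklyBelow, List.length_append, List.count_append, List.take_append]
  constructor
  · rintro ⟨hl, hc, hp⟩
    have hl' : η.length = u.length := by omega
    refine ⟨hl', by omega, fun t => ?_⟩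
    have := hp t
    rw [hl'] at this
    omega
  · rintro ⟨hl, hc, hp⟩
    refine ⟨by omega, by omega, fun t => ?_⟩
    have := hp t
    rw [hl]
    omega

lemma not_weaklyBelow_append_true_append_false :
    ¬ weaklyBelow (u ++ [true]) (η ++ [false]) := by
  rintro ⟨hl, hc, hp⟩
  have := hp u.length
  simp only [List.length_append, List.length_singleton, Nat.add_right_cancel_iff] at hl
  rw [List.take_left' rfl, List.take_left' hl] at this
  simp at hc
  omega

lemma false_mem_of_weaklyBelow_append_false (h : weaklyBelow (u ++ [false]) η) : false ∈ η := by
  obtain ⟨hl, hc, -⟩ := h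
  by_contra hf
  have hall : η.count true = η.length :=
    List.count_eq_length.mpr fun b hb => by cases b <;> trivial
  have := u.count_le_length (a := true)
  simp only [List.length_append, List.length_singleton, List.count_append] at hl hc
  simp at hc
  omega

lemma weaklyBelow_append_false_iff :
    weaklyBelow (u ++ [false]) (β ++ false :: .replicate s true) ↔
      weaklyBelow u (β ++ .replicate s true) := by
  have hη (t : ℕ) : ((β ++ false :: .replicate s true).take t).count true =
      (β.take t).count true + min (t - β.length - 1) s := by
    simp [count_true_take_append_false_cons]
  have hη' (t : ℕ) : ((β ++ .replicate s true).take t).count true =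
      (β.take t).count true + min (t - β.length) s := by
    simp [List.take_append]
  have hu (t : ℕ) : ((u ++ [false]).take t).count true = (u.take t).count true := by
    simpa using count_true_take_append_false_cons u [] t
  have hβ (t : ℕ) (ht : β.length ≤ t) : (β.take t).count true = β.count true := by
    rw [List.take_of_length_le ht]
  simp only [weaklyBelow, List.length_append, List.length_cons, List.length_replicate,
    List.length_nil, zero_add, List.count_append, ne_eq, Bool.false_eq_true, not_false_eq_true,
    List.count_cons_of_ne, List.count_replicate_self, List.count_nil, add_zero, hη, hu, hη']
  constructor
  · rintro ⟨hl, hc, hp⟩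
    refine ⟨by omega, hc, fun t => ?_⟩
    rcases le_or_gt t β.length with ht | ht
    · have := hp t
      omega
    · -- past its last east step the path only climbs, and `u` has to climb as high by the end
      have := u.count_le_count_take_add true t
      rw [hβ t ht.le]
      omega
  · rintro ⟨hl, hc, hp⟩
    refine ⟨by omega, hc, fun t => ?_⟩
    rcases le_or_gt t β.length with ht | ht
    · have := hp t
      omega
    · have h1 := hp (t - 1)
      have h2 := u.count_take_le_count_take true (Nat.sub_le t 1)
      rw [hβ t ht.le]
      rw [hβ (t - 1) (by omega)] at h1
      omega

def insertStep : Bool → List Bool → ℕ → List Bool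
  | true, η, _ => η ++ [true]
  | false, η, s => η.insertIdx (η.length - s) false

lemma insertStep_false_of_eq (h : η = β ++ .replicate s true) :
    insertStep false η s = β ++ false :: .replicate s true := by
  subst h
  simp [insertStep, List.insertIdx_length_append]

lemma trailingNorth_insertStep (h : IsSlot x (trailingNorth η + 1) s) :
    trailingNorth (insertStep x η s) = s := by
  cases x with
  | false =>
    obtain ⟨β, rfl⟩ := exists_eq_append_replicate_of_le_trailingNorth (Nat.lt_succ_iff.mp h)
    rw [insertStep_false_of_eq rfl, trailingNorth_append_false_replicate]
  | true => exact trailingNorth_append_true.trans h.symm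

lemma weaklyBelow_insertStep (hη : weaklyBelow u η) (h : IsSlot x (trailingNorth η + 1) s) :
    weaklyBelow (u ++ [x]) (insertStep x η s) := by
  cases x with
  | false =>
    obtain ⟨β, rfl⟩ := exists_eq_append_replicate_of_le_trailingNorth (Nat.lt_succ_iff.mp h)
    rwa [insertStep_false_of_eq rfl, weaklyBelow_append_false_iff]
  | true => exact weaklyBelow_append_iff.mpr hη

lemma eq_of_insertStep_eq {η₁ η₂ : List Bool} (hl : η₁.length = η₂.length)
    (h : insertStep x η₁ s = insertStep x η₂ s) : η₁ = η₂ := by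
  cases x with
  | false =>
    simp only [insertStep, hl] at h
    exact List.insertIdx_injective _ _ h
  | true => exact List.append_cancel_right h

lemma exists_insertStep_eq (h : weaklyBelow (u ++ [x]) η) :
    ∃ η' s, weaklyBelow u η' ∧ IsSlot x (trailingNorth η' + 1) s ∧ insertStep x η' s = η := by
  cases x with
  | false =>
    obtain ⟨β, hβ⟩ := exists_eq_append_false_replicate (false_mem_of_weaklyBelow_append_false h)
    refine ⟨β ++ .replicate (trailingNorth η) true, trailingNorth η, ?_, ?_, ?_⟩
    · rwa [hβ, weaklyBelow_append_false_iff] at h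
    · show _ < _
      rw [trailingNorth_append_replicate]
      omega
    · rw [insertStep_false_of_eq rfl, ← hβ]
  | true =>
    rcases η.eq_nil_or_concat' with rfl | ⟨η', b, rfl⟩
    · simp [weaklyBelow] at h
    cases b with
    | false => exact absurd h not_weaklyBelow_append_true_append_false
    | true => exact ⟨η', _, weaklyBelow_append_iff.mp h, rfl, rfl⟩

end Paths

abbrev TreesWithCanopy (u : List Bool) : Type :=
  {B : BinTree // B.size = u.length + 1 ∧ B.canopy = u}

abbrev PathsBelow (u : List Bool) : Type := {η : List Bool // weaklyBelow u η}

open BinTree in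
noncomputable def treesSnocEquiv (u : List Bool) (x : Bool) :
    {p : TreesWithCanopy u × ℕ // IsSlot x p.1.1.rightBranchLen p.2} ≃
      TreesWithCanopy (u ++ [x]) :=
  Equiv.ofBijective
    (fun p => ⟨p.1.1.1.insertLast p.1.2, insertLast_size_canopy p.1.1.2.1 p.1.1.2.2 p.2⟩)
    ⟨fun p q h => by
      obtain ⟨hB, hi⟩ := eq_of_insertLast_eq (isSlot_iff.mp p.2).1 (isSlot_iff.mp q.2).1
        (congrArg Subtype.val h)
      exact Subtype.ext (Prod.ext (Subtype.ext hB) hi),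
    fun ⟨B, hsize, hcan⟩ => by
      obtain ⟨B', i, hi, rfl⟩ := exists_eq_insertLast (ne_nil_of_size_eq_succ hsize)
      rw [size_insertLast hi, List.length_append, List.length_singleton] at hsize
      replace hsize := Nat.succ_injective hsize
      rw [canopy_insertLast (ne_nil_of_size_eq_succ hsize) hi] at hcan
      obtain ⟨hcan', hx⟩ := List.append_inj' hcan rfl
      refine ⟨⟨⟨⟨B', hsize, hcan'⟩, i⟩, isSlot_iff.mpr ⟨hi, ?_⟩⟩, rfl⟩
      simpa using hx⟩

noncomputable def pathsSnocEquiv (u : List Bool) (x : Bool) :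
    {p : PathsBelow u × ℕ // IsSlot x (trailingNorth p.1.1 + 1) p.2} ≃ PathsBelow (u ++ [x]) :=
  Equiv.ofBijective (fun p => ⟨insertStep x p.1.1.1 p.1.2, weaklyBelow_insertStep p.1.1.2 p.2⟩)
    ⟨fun p q h => by
      have h' := congrArg Subtype.val h
      have hs : p.1.2 = q.1.2 := by
        simpa [trailingNorth_insertStep p.2, trailingNorth_insertStep q.2] using
          congrArg trailingNorth h'
      dsimp only at h'
      rw [hs] at h'
      have hη := eq_of_insertStep_eq (p.1.1.2.1.trans q.1.1.2.1.symm) h'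
      exact Subtype.ext (Prod.ext (Subtype.ext hη) hs),
    fun η => by
      obtain ⟨η', s, hη', hs, h⟩ := exists_insertStep_eq η.2
      exact ⟨⟨⟨⟨η', hη'⟩, s⟩, hs⟩, Subtype.ext h⟩⟩

lemma exists_equiv_treesWithCanopy_pathsBelow (u : List Bool) :
    ∃ e : TreesWithCanopy u ≃ PathsBelow u,
      ∀ B, B.1.rightBranchLen = trailingNorth (e B).1 + 1 := by
  induction u using List.reverseRecOn with
  | nil =>
    have hleaf (B : TreesWithCanopy []) : B.1 = .node .nil .nil :=
      BinTree.eq_node_nil_nil_of_size_eq_one B.2.1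
    have hnil (η : PathsBelow []) : η.1 = [] := List.eq_nil_of_length_eq_zero η.2.1
    refine ⟨⟨fun _ => ⟨[], rfl, rfl, fun _ => le_rfl⟩, fun _ => ⟨.node .nil .nil, rfl, rfl⟩,
      fun B => Subtype.ext (hleaf B).symm, fun η => Subtype.ext (hnil η).symm⟩, fun B => ?_⟩
    simp [hleaf B, BinTree.rightBranchLen, trailingNorth]
  | append_singleton u x ih =>
    obtain ⟨e, he⟩ := ih
    let slots : {p : TreesWithCanopy u × ℕ // IsSlot x p.1.1.rightBranchLen p.2} ≃
        {p : PathsBelow u × ℕ // IsSlot x (trailingNorth p.1.1 + 1) p.2} :=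
      Equiv.subtypeEquiv (e.prodCongr (Equiv.refl ℕ)) fun p => by rw [he p.1]; rfl
    refine ⟨(treesSnocEquiv u x).symm.trans (slots.trans (pathsSnocEquiv u x)), fun B => ?_⟩
    obtain ⟨p, rfl⟩ := (treesSnocEquiv u x).surjective B
    simp only [Equiv.trans_apply, Equiv.symm_apply_apply]
    exact (BinTree.rightBranchLen_insertLast (isSlot_iff.mp p.2).1).trans
      (congrArg (· + 1) (trailingNorth_insertStep (slots p).2).symm)

theorem card_binTree_canopy_eq_card_paths_below_general
    (n : ℕ) (u : List Bool) (hu : u.length = n) :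
    Nat.card {B : BinTree // B.size = n + 1 ∧ B.canopy = u} =
      Nat.card {η : List Bool // weaklyBelow u η} := by
  subst hu
  obtain ⟨e, -⟩ := exists_equiv_treesWithCanopy_pathsBelow u
  exact Nat.card_congr e

/-- For every integer `n ≥ 1` and every word `u` of length `n` over
`{a, b}`, the number of binary trees with `n + 1` vertices whose canopy is `u`
equals the number of lattice paths `η` (with unit north and east steps) that are
weakly below the path `ω_u`. -/
theorem card_binTree_canopy_eq_card_paths_below
    (n : ℕ) (hn : 1 ≤ n) (u : List Bool) (hu : u.length = n) :
    Nat.card {B : BinTree // B.size = n + 1 ∧ B.canopy = u} =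
      Nat.card {η : List Bool // weaklyBelow u η} :=
  card_binTree_canopy_eq_card_paths_below_general n u hu
end
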